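/- arXiv:math/0411453 — 4 statements merged into one kernel-verified Lean document; each statement's English description precedes it below -/
import Mathlib

section
/- Let S be a real 2n×2n symplectic matrix with det(S - I) ≠ 0 and M_S = (1/2) J (S + I)(S - I)⁻¹. Then for every z₀ ∈ ℝ^{2n}, ⟨M_S (S - I) z₀, (S - I) z₀⟩ = -σ(S z₀, z₀), where σ(z, z') = ⟨Jz, z'⟩. -/
open Matrix

lemma quad_eq_of_symm_part_eq {m : Type*} [Fintype m] [DecidableEq m]
    (C D : Matrix m m ℝ) (h : C + Cᵀ = D + Dᵀ) (z : m → ℝ) :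
    z ⬝ᵥ C.mulVec z = z ⬝ᵥ D.mulVec z := by
  have key : ∀ E : Matrix m m ℝ, z ⬝ᵥ (E + Eᵀ).mulVec z = 2 * (z ⬝ᵥ E.mulVec z) := by
    intro E
    have h1 : z ⬝ᵥ Eᵀ.mulVec z = z ⬝ᵥ E.mulVec z := by
      rw [Matrix.dotProduct_mulVec, Matrix.vecMul_transpose, dotProduct_comm]
    rw [Matrix.add_mulVec, dotProduct_add, h1]
    ring
  have := key C
  rw [h, key D] at this
  linarith

lemma mulVec_dot_left {m : Type*} [Fintype m] [DecidableEq m]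
    (A : Matrix m m ℝ) (x y : m → ℝ) :
    A.mulVec x ⬝ᵥ y = x ⬝ᵥ Aᵀ.mulVec y := by
  rw [Matrix.dotProduct_mulVec, Matrix.vecMul_transpose, dotProduct_comm]

theorem mehlig_wilkinson_MS_quadform' (n : ℕ)
    (S J : Matrix (Fin n ⊕ Fin n) (Fin n ⊕ Fin n) ℝ)
    (hJ : J = Matrix.fromBlocks 0 1 (-1) 0)
    (hS : Sᵀ * J * S = J)
    (hdet : (S - 1).det ≠ 0)
    (M : Matrix (Fin n ⊕ Fin n) (Fin n ⊕ Fin n) ℝ)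
    (hM : M = (1 / 2 : ℝ) • (J * (S + 1) * (S - 1)⁻¹))
    (z₀ : Fin n ⊕ Fin n → ℝ) :
    M.mulVec ((S - 1).mulVec z₀) ⬝ᵥ (S - 1).mulVec z₀ =
      -(J.mulVec (S.mulVec z₀) ⬝ᵥ z₀) := by
  have hJt : Jᵀ = -J := by
    subst hJ
    rw [Matrix.fromBlocks_transpose, Matrix.fromBlocks_neg]
    norm_num
  have hinv : (S - 1)⁻¹ * (S - 1) = 1 :=
    Matrix.nonsing_inv_mul _ (isUnit_iff_ne_zero.mpr hdet)
  have hM2 : M * (S - 1) = (1 / 2 : ℝ) • (J * (S + 1)) := by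
    rw [hM, Matrix.smul_mul, mul_assoc, hinv, mul_one]
  have hL : M.mulVec ((S - 1).mulVec z₀) ⬝ᵥ (S - 1).mulVec z₀
      = z₀ ⬝ᵥ (((M * (S - 1))ᵀ * (S - 1)).mulVec z₀) := by
    rw [Matrix.mulVec_mulVec, mulVec_dot_left, ← Matrix.mulVec_mulVec]
  have hR : J.mulVec (S.mulVec z₀) ⬝ᵥ z₀ = z₀ ⬝ᵥ ((J * S)ᵀ.mulVec z₀) := by
    rw [Matrix.mulVec_mulVec, mulVec_dot_left]
  rw [hL, hR, ← dotProduct_neg, ← Matrix.neg_mulVec]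
  apply quad_eq_of_symm_part_eq
  rw [hM2]
  have hS' : Sᵀ * (J * S) = J := by rw [← mul_assoc, hS]
  simp only [Matrix.transpose_smul, Matrix.transpose_mul, Matrix.transpose_sub,
    Matrix.transpose_add, Matrix.transpose_one, Matrix.transpose_neg,
    Matrix.transpose_transpose, hJt, Matrix.smul_mul, Matrix.mul_smul,
    neg_mul, mul_neg, sub_mul, mul_sub, add_mul, mul_add, mul_one, one_mul,
    neg_neg, smul_neg, smul_add, smul_sub, mul_assoc, hS', hS]
  module
end

section
/- For an invertible real symmetric n×n matrix M, (2π)^{-n/2} ∫_{ℝⁿ} e^{-i⟨p,x⟩} e^{(i/2)⟨Mx,x⟩} dx = |det M|^{-1/2} e^{(iπ/4) sgn M} e^{-(i/2)⟨M⁻¹p, p⟩}, where sgn M is the number of positive eigenvalues of M minus the number of negative eigenvalues (the integral understood as a Fourier transform of a tempered distribution or via regularization). -/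
/-!
Diagonalize `M = U diag(λ) Uᵀ` with `U` orthogonal. The substitution `x = U y` preserves Lebesgue
measure and splits the regularized integral into one-dimensional Gaussian integrals
`∫ exp (-(ε - iλⱼ/2) y² - i qⱼ y) dy = (π / (ε - iλⱼ/2))^{1/2} exp (-qⱼ² / (4 (ε - iλⱼ/2)))`
with `q = Uᵀ p`. Since `λⱼ ≠ 0`, at `ε = 0` the base `π / (-iλⱼ/2) = 2πi/λⱼ` is off the branch cut,
so each factor is continuous there, with value
`(2π/|λⱼ|)^{1/2} e^{iπ sign(λⱼ)/4} e^{-i qⱼ²/(2λⱼ)}`. The product of these values is the right-hand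
side, because `det M = ∏ λⱼ` and `⟨M⁻¹p, p⟩ = ∑ qⱼ²/λⱼ`.
-/

open Matrix MeasureTheory Filter Set Complex
open scoped Real

namespace Matrix

section Orthogonal

variable {ι : Type*} [Fintype ι] [DecidableEq ι] {U : Matrix ι ι ℝ}

theorem abs_det_of_mem_orthogonalGroup (hU : U ∈ orthogonalGroup ι ℝ) : |U.det| = 1 := by
  simpa using CStarRing.norm_of_mem_unitary (det_of_mem_unitary hU)

theorem integral_comp_mulVec_of_mem_orthogonalGroup {E : Type*} [NormedAddCommGroup E]
    [NormedSpace ℝ E] (hU : U ∈ orthogonalGroup ι ℝ) (f : (ι → ℝ) → E) :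
    ∫ x, f (U *ᵥ x) = ∫ x, f x := by
  have hdet : U.det ≠ 0 := by
    intro h; simpa [h] using abs_det_of_mem_orthogonalGroup hU
  let e : (ι → ℝ) ≃L[ℝ] (ι → ℝ) := (toLin'OfInv ((mem_orthogonalGroup_iff' _ _).mp hU)
    ((mem_orthogonalGroup_iff _ _).mp hU)).toContinuousLinearEquiv
  have he : ⇑e = toLin' U := by ext x; simp [e]
  have hmp : MeasurePreserving e volume volume := by
    refine ⟨e.continuous.measurable, ?_⟩
    rw [he, Real.map_matrix_volume_pi_eq_smul_volume_pi hdet, abs_inv,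
      abs_det_of_mem_orthogonalGroup hU]
    simp
  simpa [he] using hmp.integral_comp e.toHomeomorph.measurableEmbedding f

theorem mulVec_dotProduct_mulVec_of_mem_orthogonalGroup (hU : U ∈ orthogonalGroup ι ℝ)
    (x y : ι → ℝ) : (U *ᵥ x) ⬝ᵥ (U *ᵥ y) = x ⬝ᵥ y := by
  rw [dotProduct_mulVec, vecMul_mulVec, (mem_orthogonalGroup_iff' _ _).mp hU, vecMul_one]

end Orthogonal

theorem conj_diagonal_mulVec_dotProduct {ι R : Type*} [Fintype ι] [DecidableEq ι] [CommRing R]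
    (U : Matrix ι ι R) (d : ι → R) (x : ι → R) :
    ((U * diagonal d * Uᵀ) *ᵥ x) ⬝ᵥ x = ∑ i, d i * (Uᵀ *ᵥ x) i ^ 2 := by
  rw [← mulVec_mulVec, ← mulVec_mulVec, dotProduct_comm, dotProduct_mulVec, ← mulVec_transpose]
  simp only [dotProduct, mulVec_diagonal]
  exact Finset.sum_congr rfl fun i _ => by ring

theorem inv_conj_diagonal {ι K : Type*} [Fintype ι] [DecidableEq ι] [Field K]
    {U : Matrix ι ι K} (hU : U ∈ orthogonalGroup ι K) {d : ι → K} (hd : ∀ i, d i ≠ 0) :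
    (U * diagonal d * Uᵀ)⁻¹ = U * diagonal d⁻¹ * Uᵀ := by
  refine inv_eq_left_inv ?_
  calc U * diagonal d⁻¹ * Uᵀ * (U * diagonal d * Uᵀ)
      = U * (diagonal d⁻¹ * (Uᵀ * U) * diagonal d) * Uᵀ := by simp only [Matrix.mul_assoc]
    _ = 1 := by
      rw [(mem_orthogonalGroup_iff' _ _).mp hU, Matrix.mul_one, diagonal_mul_diagonal]
      simp [hd, (mem_orthogonalGroup_iff _ _).mp hU]

theorem IsHermitian.eq_eigenvectorUnitary_mul_diagonal_mul_transpose {ι : Type*}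
    [Fintype ι] [DecidableEq ι] {M : Matrix ι ι ℝ} (hM : M.IsHermitian) :
    M = (hM.eigenvectorUnitary : Matrix ι ι ℝ) * diagonal hM.eigenvalues *
      (hM.eigenvectorUnitary : Matrix ι ι ℝ)ᵀ := by
  simpa [star_eq_conjTranspose] using hM.spectral_theorem

end Matrix

theorem Finset.sum_sign_eq_card_pos_sub_card_neg {ι α : Type*} [Fintype ι] [Zero α]
    [LinearOrder α] (l : ι → α) :
    ∑ i, (SignType.sign (l i) : ℤ) =
      ((Finset.univ.filter fun i => 0 < l i).card : ℤ) -
      ((Finset.univ.filter fun i => l i < 0).card : ℤ) := by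
  simp only [Finset.natCast_card_filter, ← Finset.sum_sub_distrib]
  refine Finset.sum_congr rfl fun i _ => ?_
  rcases lt_trichotomy (l i) 0 with h | h | h <;> simp [h, h.not_gt, sign_neg, sign_pos]

/-- The closed form of `∫ exp (-(ε - i l / 2) y² - i q y) dy` given by
`GaussianFourier.integral_cexp_neg_sum_mul_add`, valid for `ε > 0`. -/
noncomputable def fresnelFactor (ε l q : ℝ) : ℂ :=
  (π / (ε - I * l / 2)) ^ (1 / 2 : ℂ) * cexp ((-I * q) ^ 2 / (4 * (ε - I * l / 2)))

theorem ofReal_mul_exp_cpow_half {r θ : ℝ} (hr : 0 < r) (hθ₁ : -π < θ) (hθ₂ : θ ≤ π) :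
    ((r : ℂ) * cexp (θ * I)) ^ (1 / 2 : ℂ) = (r ^ (1 / 2 : ℝ) : ℝ) * cexp (θ / 2 * I) := by
  rw [cpow_def_of_ne_zero (mul_ne_zero (ofReal_ne_zero.mpr hr.ne') (exp_ne_zero _)),
    log_ofReal_mul hr (exp_ne_zero _), log_exp (by simpa using hθ₁) (by simpa using hθ₂),
    Real.rpow_def_of_pos hr, ofReal_exp, ← Complex.exp_add]
  push_cast
  ring_nf

theorem fresnelFactor_zero {l : ℝ} (hl : l ≠ 0) (q : ℝ) :
    fresnelFactor 0 l q = ((2 * π / |l|) ^ (1 / 2 : ℝ) : ℝ) *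
      cexp (I * π / 4 * (SignType.sign l : ℤ)) * cexp (-(I / 2) * (q ^ 2 / l : ℝ)) := by
  have hlc : (l : ℂ) ≠ 0 := ofReal_ne_zero.mpr hl
  have hexp : (-I * q) ^ 2 / (4 * ((0 : ℝ) - I * l / 2)) = -(I / 2) * (q ^ 2 / l : ℝ) := by
    push_cast
    field_simp
    ring_nf
  obtain ⟨θ, hθ₁, hθ₂, hbase, hθ⟩ : ∃ θ : ℝ, -π < θ ∧ θ ≤ π ∧
      (π : ℂ) / ((0 : ℝ) - I * l / 2) = ((2 * π / |l| : ℝ) : ℂ) * cexp (θ * I) ∧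
      (θ : ℂ) / 2 * I = I * π / 4 * (SignType.sign l : ℤ) := by
    rcases hl.lt_or_gt with h | h
    · refine ⟨-(π / 2), by linarith [Real.pi_pos], by linarith [Real.pi_pos], ?_, ?_⟩
      · rw [abs_of_neg h]
        push_cast
        rw [neg_mul, Complex.exp_neg, ← div_mul_eq_mul_div, exp_pi_div_two_mul_I]
        field_simp
        ring_nf
      · simp only [sign_neg h, SignType.coe_neg_one]
        push_cast
        ring
    · refine ⟨π / 2, by linarith [Real.pi_pos], by linarith [Real.pi_pos], ?_, ?_⟩
      · rw [abs_of_pos h]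
        push_cast
        rw [exp_pi_div_two_mul_I]
        field_simp
        ring_nf
        simp only [I_sq]
        ring
      · simp only [sign_pos h, SignType.coe_one]
        push_cast
        ring
  rw [fresnelFactor, hexp, hbase, ofReal_mul_exp_cpow_half (by positivity) hθ₁ hθ₂, hθ]

theorem continuousAt_fresnelFactor {l : ℝ} (hl : l ≠ 0) (q : ℝ) :
    ContinuousAt (fun ε => fresnelFactor ε l q) 0 := by
  have hb : ((0 : ℝ) : ℂ) - I * l / 2 ≠ 0 := by simp [Complex.ext_iff, hl]
  have hslit : (π : ℂ) / ((0 : ℝ) - I * l / 2) ∈ slitPlane := by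
    rw [mem_slitPlane_iff]
    right
    simp [div_im, hl, Real.pi_ne_zero]
  have hb0 : ContinuousAt (fun ε : ℝ => (ε : ℂ) - I * l / 2) 0 :=
    (continuous_ofReal.sub continuous_const).continuousAt
  exact ((continuousAt_const.div hb0 hb).cpow continuousAt_const hslit).mul
    (continuousAt_const.div (continuousAt_const.mul hb0) (mul_ne_zero (by norm_num) hb)).cexp

theorem rpow_neg_card_div_two_mul_prod_div_rpow_half {ι : Type*} [Fintype ι] {c : ℝ}
    (hc : 0 < c) {x : ι → ℝ} (hx : ∀ i, 0 ≤ x i) :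
    c ^ (-(Fintype.card ι : ℝ) / 2) * ∏ i, (c / x i) ^ (1 / 2 : ℝ) =
      (∏ i, x i) ^ (-(1 : ℝ) / 2) := by
  have hprod : 0 ≤ ∏ i, x i := Finset.prod_nonneg fun i _ => hx i
  simp_rw [Real.div_rpow hc.le (hx _), Finset.prod_div_distrib, Finset.prod_const,
    Real.finsetProd_rpow _ _ fun i _ => hx i, Finset.card_univ]
  rw [← Real.rpow_natCast, ← Real.rpow_mul hc.le, mul_div_assoc', ← Real.rpow_add hc,
    show -(Fintype.card ι : ℝ) / 2 + 1 / 2 * Fintype.card ι = 0 by ring, Real.rpow_zero,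
    neg_div, Real.rpow_neg hprod, one_div]

theorem prod_fresnelFactor_zero {ι : Type*} [Fintype ι] {l : ι → ℝ} (hl : ∀ i, l i ≠ 0)
    (q : ι → ℝ) :
    (((2 * π) ^ (-(Fintype.card ι : ℝ) / 2) : ℝ) : ℂ) * ∏ i, fresnelFactor 0 (l i) (q i) =
      ((|∏ i, l i| ^ (-(1 : ℝ) / 2) : ℝ) : ℂ) *
        cexp (I * π / 4 * ((∑ i, (SignType.sign (l i) : ℤ) : ℤ) : ℂ)) *
        cexp (-(I / 2) * ((∑ i, q i ^ 2 / l i : ℝ) : ℂ)) := by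
  simp_rw [fresnelFactor_zero (hl _), Finset.prod_mul_distrib, ← Complex.exp_sum,
    ← Finset.mul_sum, Finset.abs_prod, ← rpow_neg_card_div_two_mul_prod_div_rpow_half
      (by positivity : (0 : ℝ) < 2 * π) fun i => abs_nonneg (l i)]
  push_cast
  ring

theorem integral_fresnel_regularized_eq_prod {ι : Type*} [Fintype ι] [DecidableEq ι]
    {M U : Matrix ι ι ℝ} {d : ι → ℝ} (hU : U ∈ orthogonalGroup ι ℝ)
    (hM : M = U * diagonal d * Uᵀ) (p : ι → ℝ) {ε : ℝ} (hε : 0 < ε) :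
    ∫ x, cexp (-I * (p ⬝ᵥ x : ℝ) + (I / 2) * (M *ᵥ x ⬝ᵥ x : ℝ) - ε * (x ⬝ᵥ x : ℝ)) =
      ∏ i, fresnelFactor ε (d i) ((Uᵀ *ᵥ p) i) := by
  subst hM
  have hb : ∀ i, 0 < ((ε : ℂ) - I * d i / 2).re := by simp [hε]
  simp only [fresnelFactor]
  rw [← integral_comp_mulVec_of_mem_orthogonalGroup hU,
    ← GaussianFourier.integral_cexp_neg_sum_mul_add hb fun i => -I * (Uᵀ *ᵥ p) i]
  congr 1 with y
  congr 1
  rw [conj_diagonal_mulVec_dotProduct, mulVec_dotProduct_mulVec_of_mem_orthogonalGroup hU,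
    mulVec_mulVec, (mem_orthogonalGroup_iff' _ _).mp hU, one_mulVec, dotProduct_mulVec,
    ← mulVec_transpose]
  simp only [dotProduct]
  push_cast
  simp only [Finset.mul_sum, ← Finset.sum_neg_distrib, ← Finset.sum_add_distrib,
    ← Finset.sum_sub_distrib]
  exact Finset.sum_congr rfl fun i _ => by ring

/-- Generalized Fresnel formula: for an invertible real symmetric matrix `M`,
`(2π)^{-n/2} ∫ e^{-i⟨p,x⟩} e^{(i/2)⟨Mx,x⟩} dx
  = |det M|^{-1/2} e^{iπ sgn M/4} e^{-(i/2)⟨M⁻¹p,p⟩}`,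
the integral being understood via Gaussian regularization `e^{-ε‖x‖²}`, `ε → 0⁺`. -/
theorem fresnel_formula (n : ℕ) (M : Matrix (Fin n) (Fin n) ℝ)
    (hM : M.IsHermitian) (hdet : M.det ≠ 0) (p : Fin n → ℝ)
    (sgn : ℤ)
    (hsgn : sgn =
      ((Finset.univ.filter fun i => 0 < hM.eigenvalues i).card : ℤ) -
      ((Finset.univ.filter fun i => hM.eigenvalues i < 0).card : ℤ)) :
    Tendsto
      (fun ε : ℝ =>
        ((2 * Real.pi : ℝ) ^ (-(n : ℝ) / 2) : ℝ) *
          ∫ x : Fin n → ℝ,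
            Complex.exp (-Complex.I * (p ⬝ᵥ x : ℝ) +
              (Complex.I / 2) * (M.mulVec x ⬝ᵥ x : ℝ) - (ε : ℂ) * (x ⬝ᵥ x : ℝ)))
      (nhdsWithin 0 (Ioi 0))
      (nhds (((|M.det| : ℝ) ^ (-(1 : ℝ) / 2) : ℝ) *
        Complex.exp (Complex.I * Real.pi / 4 * (sgn : ℂ)) *
        Complex.exp (-(Complex.I / 2) * (M⁻¹.mulVec p ⬝ᵥ p : ℝ)))) := by
  obtain ⟨U, hU, hMU⟩ : ∃ U ∈ orthogonalGroup (Fin n) ℝ,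
      M = U * diagonal hM.eigenvalues * Uᵀ :=
    ⟨_, hM.eigenvectorUnitary.2, hM.eq_eigenvectorUnitary_mul_diagonal_mul_transpose⟩
  have hdet_eq : M.det = ∏ i, hM.eigenvalues i := by simpa using hM.det_eq_prod_eigenvalues
  generalize hM.eigenvalues = lam at hsgn hMU hdet_eq
  have hlam : ∀ i, lam i ≠ 0 := fun i hi =>
    hdet (hdet_eq ▸ Finset.prod_eq_zero (Finset.mem_univ i) hi)
  have hinv : M⁻¹ *ᵥ p ⬝ᵥ p = ∑ i, (Uᵀ *ᵥ p) i ^ 2 / lam i := by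
    rw [hMU, inv_conj_diagonal hU hlam, conj_diagonal_mulVec_dotProduct]
    simp [div_eq_inv_mul]
  have hlimit := prod_fresnelFactor_zero hlam (Uᵀ *ᵥ p)
  rw [Fintype.card_fin, ← hdet_eq, ← hinv, Finset.sum_sign_eq_card_pos_sub_card_neg, ← hsgn]
    at hlimit
  have hfactors := tendsto_finsetProd Finset.univ fun i _ =>
    (continuousAt_fresnelFactor (hlam i) ((Uᵀ *ᵥ p) i)).tendsto.mono_left
      (nhdsWithin_le_nhds (s := Ioi 0))
  rw [← hlimit]
  refine (hfactors.const_mul _).congr' ?_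
  filter_upwards [self_mem_nhdsWithin] with ε hε
  rw [integral_fresnel_regularized_eq_prod hU hMU p hε]
end

section
/- Let P, Q, L be real n×n matrices with P, Q symmetric, L invertible, and suppose P + Q - L - Lᵀ is invertible. Let W(x,x') = (1/2)⟨Px,x⟩ - ⟨Lx,x'⟩ + (1/2)⟨Qx',x'⟩ and S_W the associated free symplectic matrix [[L⁻¹Q, L⁻¹], [PL⁻¹Q - Lᵀ, PL⁻¹]]. Then for every p₀ ∈ ℝⁿ, the unique (x, p) with (S_W - I)(x, p) = (0, p₀) is given by x = (P + Q - L - Lᵀ)⁻¹ p₀ and p = (L - Q)(P + Q - L - Lᵀ)⁻¹ p₀. -/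
open Matrix

theorem SW_sub_one_solve (n : ℕ)
    (P Q L : Matrix (Fin n) (Fin n) ℝ)
    (hP : Pᵀ = P) (hQ : Qᵀ = Q) (hL : IsUnit L.det)
    (hR : IsUnit (P + Q - L - Lᵀ).det)
    (p₀ x p : Fin n → ℝ) :
    (Matrix.fromBlocks (L⁻¹ * Q) L⁻¹ (P * L⁻¹ * Q - Lᵀ) (P * L⁻¹) - 1).mulVec
        (Sum.elim x p) = Sum.elim (0 : Fin n → ℝ) p₀ ↔
      x = (P + Q - L - Lᵀ)⁻¹.mulVec p₀ ∧
        p = ((L - Q) * (P + Q - L - Lᵀ)⁻¹).mulVec p₀ := by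
  set R := P + Q - L - Lᵀ with hRdef
  have hLL : L⁻¹ * L = 1 := nonsing_inv_mul L hL
  have hLL' : L * L⁻¹ = 1 := mul_nonsing_inv L hL
  have hRR : R⁻¹ * R = 1 := nonsing_inv_mul R hR
  have hRR' : R * R⁻¹ = 1 := mul_nonsing_inv R hR
  have hblock : (Matrix.fromBlocks (L⁻¹ * Q) L⁻¹ (P * L⁻¹ * Q - Lᵀ) (P * L⁻¹)
      - (1 : Matrix (Fin n ⊕ Fin n) (Fin n ⊕ Fin n) ℝ))
      = Matrix.fromBlocks (L⁻¹ * Q - 1) L⁻¹ (P * L⁻¹ * Q - Lᵀ) (P * L⁻¹ - 1) := by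
    rw [← Matrix.fromBlocks_one]
    ext (i|i) (j|j) <;> simp [Matrix.fromBlocks]
  have helim : ∀ (f g f' g' : Fin n → ℝ),
      Sum.elim f g = Sum.elim f' g' ↔ f = f' ∧ g = g' := by
    intro f g f' g'
    constructor
    · intro h
      exact ⟨funext fun i => congrFun h (Sum.inl i), funext fun i => congrFun h (Sum.inr i)⟩
    · rintro ⟨rfl, rfl⟩; rfl
  have hid : (P * L⁻¹ * Q - Lᵀ) + (P * L⁻¹ - 1) * (L - Q) = R := by
    rw [hRdef, sub_mul, mul_sub, mul_sub, Matrix.mul_assoc P L⁻¹ L, hLL, Matrix.mul_one]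
    simp only [one_mul]
    abel
  rw [hblock, Matrix.fromBlocks_mulVec]
  simp only [Sum.elim_comp_inl, Sum.elim_comp_inr]
  rw [helim]
  constructor
  · rintro ⟨h1, h2⟩
    -- from h1 : p = (L - Q) x
    have h1' : (L * (L⁻¹ * Q - 1)).mulVec x + (L * L⁻¹).mulVec p = 0 := by
      rw [← Matrix.mulVec_mulVec, ← Matrix.mulVec_mulVec, ← Matrix.mulVec_add, h1,
        Matrix.mulVec_zero]
    rw [hLL', Matrix.one_mulVec,
      show L * (L⁻¹ * Q - 1) = Q - L by
        rw [mul_sub, mul_one, ← Matrix.mul_assoc, hLL', Matrix.one_mul]] at h1'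
    have hp : p = (L - Q).mulVec x := by
      have := eq_neg_of_add_eq_zero_right h1'
      rw [this, ← Matrix.neg_mulVec, neg_sub]
    have hx : R.mulVec x = p₀ := by
      rw [← hid, Matrix.add_mulVec, ← Matrix.mulVec_mulVec, ← hp]
      exact h2
    have hx' : x = R⁻¹.mulVec p₀ := by
      rw [← hx, Matrix.mulVec_mulVec, hRR, Matrix.one_mulVec]
    refine ⟨hx', ?_⟩
    rw [hp, hx', Matrix.mulVec_mulVec]
  · rintro ⟨rfl, rfl⟩
    constructor
    · rw [Matrix.mulVec_mulVec, Matrix.mulVec_mulVec, ← Matrix.add_mulVec,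
        show (L⁻¹ * Q - 1) * R⁻¹ + L⁻¹ * ((L - Q) * R⁻¹) = 0 by
          rw [← Matrix.mul_assoc, mul_sub, hLL, sub_mul, sub_mul, one_mul]
          abel,
        Matrix.zero_mulVec]
    · rw [Matrix.mulVec_mulVec, Matrix.mulVec_mulVec, ← Matrix.add_mulVec,
        ← Matrix.mul_assoc, ← add_mul, hid, hRR', Matrix.one_mulVec]
end

section
/- Under the assumptions of the previous statement, with M_S = (1/2) J (S_W + I)(S_W - I)⁻¹, for every p₀ ∈ ℝⁿ one has ⟨M_S (0, p₀), (0, p₀)⟩ = -⟨(P + Q - L - Lᵀ)⁻¹ p₀, p₀⟩. -/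
open Matrix

section aux
variable {α : Type*} [Ring α]

lemma aux11 (P Q L l r : α) (h : l * L = 1) :
    (l*Q - 1) * (-(r*(P-L))) + l * ((L-Q)*(-(r*(P-L))) + L) = 1 := by
  have e : (l*Q - 1) * (-(r*(P-L))) + l * ((L-Q)*(-(r*(P-L))) + L)
      = (l*Q)*(-(r*(P-L))) - (-(r*(P-L))) + (l*L)*(-(r*(P-L)))
        - (l*Q)*(-(r*(P-L))) + l*L := by noncomm_ring
  rw [e, h]; noncomm_ring

lemma aux12 (Q L l r : α) (h : l * L = 1) :
    (l*Q - 1) * r + l * ((L-Q)*r) = 0 := by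
  have e : (l*Q - 1) * r + l * ((L-Q)*r)
      = (l*Q)*r - r + (l*L)*r - (l*Q)*r := by noncomm_ring
  rw [e, h]; noncomm_ring

lemma aux21 (P Q L L' l r : α) (h1 : l * L = 1) (h2 : (P+Q-L-L')*r = 1) :
    (P*l*Q - L') * (-(r*(P-L))) + (P*l - 1) * ((L-Q)*(-(r*(P-L))) + L) = 0 := by
  have e : (P*l*Q - L') * (-(r*(P-L))) + (P*l - 1) * ((L-Q)*(-(r*(P-L))) + L)
      = (P*l*Q)*(-(r*(P-L))) - L'*(-(r*(P-L))) + P*(l*L)*(-(r*(P-L)))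
        - (P*l*Q)*(-(r*(P-L))) + P*(l*L) - L*(-(r*(P-L))) + Q*(-(r*(P-L))) - L := by
    noncomm_ring
  rw [e, h1]
  have e2 : (P*l*Q)*(-(r*(P-L))) - L'*(-(r*(P-L))) + P*(1:α)*(-(r*(P-L)))
        - (P*l*Q)*(-(r*(P-L))) + P*(1:α) - L*(-(r*(P-L))) + Q*(-(r*(P-L))) - L
      = -(((P+Q-L-L')*r)*(P-L)) + (P - L) := by noncomm_ring
  rw [e2, h2]; noncomm_ring

lemma aux22 (P Q L L' l r : α) (h1 : l * L = 1) (h2 : (P+Q-L-L')*r = 1) :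
    (P*l*Q - L') * r + (P*l - 1) * ((L-Q)*r) = 1 := by
  have e : (P*l*Q - L') * r + (P*l - 1) * ((L-Q)*r)
      = (P*l*Q)*r - L'*r + P*(l*L)*r - (P*l*Q)*r - L*r + Q*r := by noncomm_ring
  rw [e, h1]
  have e2 : (P*l*Q)*r - L'*r + P*(1:α)*r - (P*l*Q)*r - L*r + Q*r
      = (P+Q-L-L')*r := by noncomm_ring
  rw [e2, h2]

lemma auxK22 (Q L l r : α) (h : l * L = 1) :
    -((l*Q + 1) * r) + -(l * ((L-Q)*r)) = -(r + r) := by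
  have e : -((l*Q + 1) * r) + -(l * ((L-Q)*r))
      = -((l*Q)*r) - r - (l*L)*r + (l*Q)*r := by noncomm_ring
  rw [e, h]; noncomm_ring

end aux

theorem MS_on_vertical (n : ℕ)
    (P Q L : Matrix (Fin n) (Fin n) ℝ)
    (hP : Pᵀ = P) (hQ : Qᵀ = Q) (hL : IsUnit L.det)
    (hR : IsUnit (P + Q - L - Lᵀ).det)
    (S J M : Matrix (Fin n ⊕ Fin n) (Fin n ⊕ Fin n) ℝ)
    (hS : S = Matrix.fromBlocks (L⁻¹ * Q) L⁻¹ (P * L⁻¹ * Q - Lᵀ) (P * L⁻¹))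
    (hJ : J = Matrix.fromBlocks 0 1 (-1) 0)
    (hM : M = (1 / 2 : ℝ) • (J * (S + 1) * (S - 1)⁻¹))
    (p₀ : Fin n → ℝ) :
    M.mulVec (Sum.elim 0 p₀) ⬝ᵥ Sum.elim 0 p₀ =
      -((P + Q - L - Lᵀ)⁻¹.mulVec p₀ ⬝ᵥ p₀) := by
  subst hS hJ hM
  set l := L⁻¹ with hl
  set r := (P + Q - L - Lᵀ)⁻¹ with hr
  have h1 : l * L = 1 := nonsing_inv_mul L hL
  have h2 : (P + Q - L - Lᵀ) * r = 1 := mul_nonsing_inv _ hR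
  have hSN : (fromBlocks (l * Q) l (P * l * Q - Lᵀ) (P * l) - 1) *
      fromBlocks (-(r*(P-L))) r ((L-Q)*(-(r*(P-L))) + L) ((L-Q)*r) = 1 := by
    rw [← fromBlocks_one, sub_eq_add_neg, fromBlocks_neg, fromBlocks_add,
      fromBlocks_multiply, fromBlocks_inj]
    refine ⟨?_, ?_, ?_, ?_⟩
    · refine Eq.trans ?_ (aux11 P Q L l r h1); noncomm_ring
    · refine Eq.trans ?_ (aux12 Q L l r h1); noncomm_ring
    · refine Eq.trans ?_ (aux21 P Q L Lᵀ l r h1 h2); noncomm_ring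
    · refine Eq.trans ?_ (aux22 P Q L Lᵀ l r h1 h2); noncomm_ring
  have hinv : (fromBlocks (l * Q) l (P * l * Q - Lᵀ) (P * l) - 1)⁻¹ =
      fromBlocks (-(r*(P-L))) r ((L-Q)*(-(r*(P-L))) + L) ((L-Q)*r) :=
    inv_eq_right_inv hSN
  rw [hinv, show (1 : Matrix (Fin n ⊕ Fin n) (Fin n ⊕ Fin n) ℝ) = fromBlocks 1 0 0 1
      from fromBlocks_one.symm,
    fromBlocks_add, fromBlocks_multiply, fromBlocks_multiply,
    smul_mulVec, fromBlocks_mulVec, smul_dotProduct,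
    sumElim_dotProduct_sumElim]
  simp only [mulVec_zero, zero_add, dotProduct_zero, zero_mul, one_mul, mul_zero,
    mul_one, add_zero, neg_mul, neg_zero]
  rw [Sum.elim_comp_inl, Sum.elim_comp_inr, mulVec_zero, zero_add,
    auxK22 Q L l r h1]
  rw [neg_mulVec, neg_dotProduct, add_mulVec]
  rw [add_dotProduct, smul_eq_mul]
  ring
end
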